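/- arXiv:1210.1168 — 5 statements merged into one kernel-verified Lean document; each statement's English description precedes it below -/
import Mathlib

section
/- With h(x) = |log x| on (0,1) and the natural weight w(s) = 1/|log s|, one has ||h||*_w = sup_{t∈(0,1)} w(t)h*(t) = 1, while ||h||_w = sup_{t∈(0,1)} w(t)h**(t) = ∞. Hence the quasinorm ||·||*_w and the norm ||·||_w are not equivalent without the condition γ(w) < ∞. -/
open MeasureTheory ENNReal Set Filter

/-- Tail (distribution) function `T_f(t) = μ {x : |f x| ≥ t}`. -/
noncomputable def tailFn {X : Type*} [MeasurableSpace X] (μ : Measure X)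
    (f : X → ℝ) (t : ℝ) : ℝ≥0∞ := μ {x | t ≤ |f x|}

/-- Decreasing rearrangement `f*(s) = inf {t ≥ 0 : T_f(t) ≤ s}`. -/
noncomputable def rearr {X : Type*} [MeasurableSpace X] (μ : Measure X)
    (f : X → ℝ) (s : ℝ) : ℝ :=
  sInf {t : ℝ | 0 ≤ t ∧ tailFn μ f t ≤ ENNReal.ofReal s}

/-- `f**(t) = t⁻¹ ∫_0^t f*(s) ds`. -/
noncomputable def rr {X : Type*} [MeasurableSpace X] (μ : Measure X)
    (f : X → ℝ) (t : ℝ) : ℝ := t⁻¹ * ∫ s in (0:ℝ)..t, rearr μ f s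

/-- `‖f‖*_w = sup_{t>0} w(t) f*(t)` (as an `ℝ≥0∞`-valued functional). -/
noncomputable def wnormStar {X : Type*} [MeasurableSpace X] (μ : Measure X)
    (w : ℝ → ℝ) (f : X → ℝ) : ℝ≥0∞ :=
  ⨆ t ∈ Set.Ioi (0:ℝ), ENNReal.ofReal (w t * rearr μ f t)

/-- `‖f‖_w = sup_{t>0} w(t) f**(t)` (as an `ℝ≥0∞`-valued functional). -/
noncomputable def wnorm' {X : Type*} [MeasurableSpace X] (μ : Measure X)
    (w : ℝ → ℝ) (f : X → ℝ) : ℝ≥0∞ :=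
  ⨆ t ∈ Set.Ioi (0:ℝ), ENNReal.ofReal (w t * rr μ f t)

/-- `γ(w) = sup_{t>0} (w(t)/t) ∫_0^t du / w(u)`. -/
noncomputable def gammaW (w : ℝ → ℝ) : ℝ≥0∞ :=
  ⨆ t ∈ Set.Ioi (0:ℝ), ENNReal.ofReal ((w t / t) * ∫ s in (0:ℝ)..t, (w s)⁻¹)

lemma tail_eq {t : ℝ} (ht : 0 ≤ t) :
    tailFn (volume.restrict (Ioo (0:ℝ) 1)) (fun x => |Real.log x|) t
      = ENNReal.ofReal (Real.exp (-t)) := by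
  have hmeas : MeasurableSet {x : ℝ | t ≤ |Real.log x|} :=
    measurableSet_le measurable_const Real.measurable_log.abs
  simp only [tailFn, abs_abs]
  rw [Measure.restrict_apply hmeas]
  have he1 : Real.exp (-t) ≤ 1 := Real.exp_le_one_iff.2 (by linarith)
  have hsub2 : {x : ℝ | t ≤ |Real.log x|} ∩ Ioo 0 1 ⊆ Ioc 0 (Real.exp (-t)) := by
    rintro x ⟨hx, hx0, hx1⟩
    have hlog : Real.log x ≤ 0 := Real.log_nonpos hx0.le hx1.le
    rw [mem_setOf_eq, abs_of_nonpos hlog] at hx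
    exact ⟨hx0, (Real.log_le_iff_le_exp hx0).1 (by linarith)⟩
  have hsub1 : Ioo (0:ℝ) (Real.exp (-t)) ⊆ {x : ℝ | t ≤ |Real.log x|} ∩ Ioo 0 1 := by
    rintro x ⟨hx0, hxe⟩
    have hx1 : x < 1 := lt_of_lt_of_le hxe he1
    have hlog : Real.log x ≤ 0 := Real.log_nonpos hx0.le hx1.le
    have : Real.log x < -t := by
      have h := Real.log_lt_log hx0 hxe
      rwa [Real.log_exp] at h
    constructor
    · rw [mem_setOf_eq, abs_of_nonpos hlog]; linarith
    · exact ⟨hx0, hx1⟩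
  refine le_antisymm (le_trans (measure_mono hsub2) (by simp)) ?_
  calc ENNReal.ofReal (Real.exp (-t)) = volume (Ioo (0:ℝ) (Real.exp (-t))) := by simp
    _ ≤ _ := measure_mono hsub1

lemma rearr_eq {s : ℝ} (hs : s ∈ Ioo (0:ℝ) 1) :
    rearr (volume.restrict (Ioo (0:ℝ) 1)) (fun x => |Real.log x|) s = -Real.log s := by
  have hls : 0 < -Real.log s := by
    have := Real.log_neg hs.1 hs.2; linarith
  have hset : {t : ℝ | 0 ≤ t ∧
      tailFn (volume.restrict (Ioo (0:ℝ) 1)) (fun x => |Real.log x|) t ≤ ENNReal.ofReal s}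
      = Ici (-Real.log s) := by
    ext t
    simp only [mem_setOf_eq, mem_Ici]
    constructor
    · rintro ⟨ht0, hle⟩
      rw [tail_eq ht0, ENNReal.ofReal_le_ofReal_iff hs.1.le] at hle
      rw [← Real.exp_log hs.1, Real.exp_le_exp] at hle
      linarith
    · intro h
      have ht0 : 0 ≤ t := le_trans hls.le h
      refine ⟨ht0, ?_⟩
      rw [tail_eq ht0]
      apply ENNReal.ofReal_le_ofReal
      rw [← Real.exp_log hs.1]
      exact Real.exp_le_exp.2 (by linarith)
  rw [rearr, hset, csInf_Ici]

lemma rearr_zero :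
    rearr (volume.restrict (Ioo (0:ℝ) 1)) (fun x => |Real.log x|) 0 = 0 := by
  have hset : {t : ℝ | 0 ≤ t ∧
      tailFn (volume.restrict (Ioo (0:ℝ) 1)) (fun x => |Real.log x|) t ≤ ENNReal.ofReal 0}
      = ∅ := by
    ext t
    simp only [mem_setOf_eq, mem_empty_iff_false, iff_false, not_and]
    intro ht0
    rw [tail_eq ht0]
    simp [Real.exp_pos, (Real.exp_pos (-t)).not_ge, ENNReal.ofReal_pos]
  rw [rearr, hset, Real.sInf_empty]

lemma neg_log_intervalIntegrable : IntervalIntegrable (fun s => -Real.log s) volume 0 1 := by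
  have hg : IntervalIntegrable (fun s : ℝ => 2 * s ^ (-(1/2) : ℝ)) volume 0 1 :=
    (intervalIntegral.intervalIntegrable_rpow' (by norm_num)).const_mul 2
  refine hg.mono_fun' Real.measurable_log.neg.aestronglyMeasurable ?_
  rw [uIoc_of_le (by norm_num : (0:ℝ) ≤ 1)]
  filter_upwards [ae_restrict_mem measurableSet_Ioc] with x hx
  obtain ⟨hx0, hx1⟩ := hx
  have hlog : Real.log x ≤ 0 := Real.log_nonpos hx0.le hx1
  have hrt : (0:ℝ) < x ^ ((1:ℝ)/2) := Real.rpow_pos_of_pos hx0 _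
  have h1 : -Real.log x = 2 * (-Real.log (x ^ ((1:ℝ)/2))) := by
    rw [Real.log_rpow hx0]; ring
  have h2 : -Real.log (x ^ ((1:ℝ)/2)) ≤ (x ^ ((1:ℝ)/2))⁻¹ := by
    have := Real.log_le_sub_one_of_pos (inv_pos.2 hrt)
    rw [Real.log_inv] at this
    linarith
  have h3 : (x ^ ((1:ℝ)/2))⁻¹ = x ^ (-(1/2) : ℝ) := (Real.rpow_neg hx0.le _).symm
  simp only [Real.norm_eq_abs, abs_neg, abs_of_nonpos hlog]
  rw [h1, ← h3]
  nlinarith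

lemma integral_neg_log {t : ℝ} (ht0 : 0 < t) (ht1 : t ≤ 1) :
    ∫ s in (0:ℝ)..t, -Real.log s = t - t * Real.log t := by
  have hF : ContinuousOn (fun s : ℝ => s - s * Real.log s) (Icc 0 t) :=
    (continuous_id.sub Real.continuous_mul_log).continuousOn
  have hderiv : ∀ x ∈ Ioo (0:ℝ) t,
      HasDerivWithinAt (fun s : ℝ => s - s * Real.log s) (-Real.log x) (Ioi x) x := by
    intro x hx
    have h1 : HasDerivAt (fun s : ℝ => s - s * Real.log s) (1 - (Real.log x + 1)) x :=
      (hasDerivAt_id x).sub (Real.hasDerivAt_mul_log hx.1.ne')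
    have h2 : (1 : ℝ) - (Real.log x + 1) = -Real.log x := by ring
    exact (h2 ▸ h1).hasDerivWithinAt
  have hint : IntervalIntegrable (fun s : ℝ => -Real.log s) volume 0 t :=
    neg_log_intervalIntegrable.mono_set (by
      rw [uIcc_of_le ht0.le, uIcc_of_le (by norm_num : (0:ℝ) ≤ 1)]
      exact Icc_subset_Icc le_rfl ht1)
  rw [intervalIntegral.integral_eq_sub_of_hasDeriv_right_of_le ht0.le hF hderiv hint]
  simp [Real.log_zero]

lemma rr_eq {t : ℝ} (ht : t ∈ Ioo (0:ℝ) 1) :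
    rr (volume.restrict (Ioo (0:ℝ) 1)) (fun x => |Real.log x|) t = 1 - Real.log t := by
  rw [rr]
  have hcong : ∫ s in (0:ℝ)..t, rearr (volume.restrict (Ioo (0:ℝ) 1)) (fun x => |Real.log x|) s
      = ∫ s in (0:ℝ)..t, -Real.log s := by
    apply intervalIntegral.integral_congr
    intro s hs
    rw [uIcc_of_le ht.1.le] at hs
    rcases eq_or_lt_of_le hs.1 with h0 | h0
    · rw [← h0]; simp [rearr_zero, Real.log_zero]
    · exact rearr_eq ⟨h0, lt_of_le_of_lt hs.2 ht.2⟩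
  rw [hcong, integral_neg_log ht.1 ht.2.le, mul_sub, inv_mul_cancel₀ ht.1.ne']
  rw [show t⁻¹ * (t * Real.log t) = t⁻¹ * t * Real.log t from (mul_assoc _ _ _).symm,
    inv_mul_cancel₀ ht.1.ne', one_mul]

lemma val1 {t : ℝ} (ht : t ∈ Ioo (0:ℝ) 1) :
    ENNReal.ofReal (|Real.log t|⁻¹ *
      rearr (volume.restrict (Ioo (0:ℝ) 1)) (fun x => |Real.log x|) t) = 1 := by
  have hl : Real.log t < 0 := Real.log_neg ht.1 ht.2
  rw [rearr_eq ht, abs_of_neg hl, inv_mul_cancel₀ (by linarith : -Real.log t ≠ 0),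
    ENNReal.ofReal_one]

theorem stmt8 :
    (⨆ t ∈ Set.Ioo (0:ℝ) 1,
      ENNReal.ofReal (|Real.log t|⁻¹ *
        rearr (MeasureTheory.volume.restrict (Set.Ioo (0:ℝ) 1)) (fun x => |Real.log x|) t))
      = 1 ∧
    (⨆ t ∈ Set.Ioo (0:ℝ) 1,
      ENNReal.ofReal (|Real.log t|⁻¹ *
        rr (MeasureTheory.volume.restrict (Set.Ioo (0:ℝ) 1)) (fun x => |Real.log x|) t))
      = ⊤ := by
  constructor
  · refine le_antisymm (iSup₂_le fun t ht => (val1 ht).le) ?_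
    exact le_iSup₂_of_le (1/2 : ℝ) (by norm_num) (val1 (by norm_num)).ge
  · apply ENNReal.eq_top_of_forall_nnreal_le
    intro r
    set c : ℝ := (r : ℝ) + 1 with hc_def
    have hc : 0 < c := by positivity
    set t : ℝ := Real.exp (-c⁻¹) with ht_def
    have ht : t ∈ Ioo (0:ℝ) 1 := by
      refine ⟨Real.exp_pos _, ?_⟩
      calc Real.exp (-c⁻¹) < Real.exp 0 := Real.exp_lt_exp.2 (by simp [hc.le]; positivity)
        _ = 1 := Real.exp_zero
    have hlog : Real.log t = -c⁻¹ := Real.log_exp _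
    have hval : |Real.log t|⁻¹ *
        rr (volume.restrict (Ioo (0:ℝ) 1)) (fun x => |Real.log x|) t = c + 1 := by
      rw [rr_eq ht, hlog, abs_of_neg (neg_neg_iff_pos.2 (inv_pos.2 hc)), neg_neg, inv_inv,
        sub_neg_eq_add, mul_add, mul_one, mul_inv_cancel₀ hc.ne', add_comm]
    refine le_trans ?_ (le_iSup₂_of_le t ht le_rfl)
    rw [hval, ← ENNReal.ofReal_coe_nnreal]
    exact ENNReal.ofReal_le_ofReal (by linarith)
end

section
/- Let Φ(u) = e^{ν(u)} - 1 be an exponential Young function, where ν is even, convex, continuous, strictly increasing on [0,∞) with ν(0)=0. If a measurable function f on a probability space satisfies T_f(t) ≤ C₁ e^{-ν(t)} for all t ≥ 1 for some constant C₁ < ∞, then there exists a constant C₂ < ∞ such that ∫ Φ(|f|/C₂) dP < ∞, i.e., f belongs to the Orlicz space L(Φ). Consequently the weak Orlicz space wLΦ coincides with L(Φ) as a set. -/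
open MeasureTheory ENNReal Set Filter

theorem stmt10 {X : Type*} [MeasurableSpace X] (P : Measure X) [IsProbabilityMeasure P]
    (ν : ℝ → ℝ) (hνeven : ∀ u, ν (-u) = ν u) (hνconv : ConvexOn ℝ Set.univ ν)
    (hνcont : Continuous ν) (hνmono : StrictMonoOn ν (Set.Ici 0)) (hν0 : ν 0 = 0)
    (hνtop : Filter.Tendsto ν Filter.atTop Filter.atTop)
    (f : X → ℝ) (hf : Measurable f)
    (C₁ : ℝ) (hC₁ : 0 < C₁)
    (htail : ∀ t : ℝ, 1 ≤ t → tailFn P f t ≤ ENNReal.ofReal (C₁ * Real.exp (-ν t))) :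
    ∃ C₂ : ℝ, 0 < C₂ ∧
      ∫⁻ x, ENNReal.ofReal (Real.exp (ν (|f x| / C₂)) - 1) ∂P < ⊤ := by
  -- monotonicity facts about ν on [0,∞)
  have hmonoOn : MonotoneOn ν (Set.Ici 0) := hνmono.monotoneOn
  have hν_nonneg : ∀ u : ℝ, 0 ≤ u → 0 ≤ ν u := by
    intro u hu
    have := hmonoOn (le_refl (0:ℝ)) hu hu
    rwa [hν0] at this
  -- convexity: ν (2u) ≥ 2 ν u
  have hdouble : ∀ u : ℝ, 2 * ν u ≤ ν (2 * u) := by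
    intro u
    have h := hνconv.2 (mem_univ (2 * u)) (mem_univ (0:ℝ))
      (by norm_num : (0:ℝ) ≤ 1/2) (by norm_num : (0:ℝ) ≤ 1/2) (by norm_num)
    simp only [smul_eq_mul, mul_zero, add_zero, hν0] at h
    have : (1:ℝ)/2 * (2*u) = u := by ring
    rw [this] at h
    linarith
  refine ⟨2, by norm_num, ?_⟩
  set g : X → ℝ := fun x => Real.exp (ν (|f x| / 2)) - 1 with hg_def
  have hg_nonneg : ∀ x, 0 ≤ g x := by
    intro x
    have h1 : 0 ≤ ν (|f x| / 2) := hν_nonneg _ (by positivity)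
    have := Real.one_le_exp h1
    simp only [hg_def]; linarith
  have hg_meas : Measurable g :=
    (Real.measurable_exp.comp (hνcont.measurable.comp ((hf.abs).div_const 2))).sub
      measurable_const
  rw [lintegral_eq_lintegral_meas_le P (Eventually.of_forall hg_nonneg) hg_meas.aemeasurable]
  -- the dominating constant
  set t₀ : ℝ := Real.exp (ν (1/2)) - 1 with ht₀_def
  have ht₀ : 0 ≤ t₀ := by
    have : (1:ℝ) ≤ Real.exp (ν (1/2)) := Real.one_le_exp (hν_nonneg _ (by norm_num))
    simp only [ht₀_def]; linarith
  set C : ℝ := max C₁ ((1 + t₀)^2) with hC_def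
  have hC_pos : 0 < C := lt_of_lt_of_le hC₁ (le_max_left _ _)
  -- pointwise bound on the distribution function
  have key : ∀ t ∈ Ioi (0:ℝ),
      P {x | t ≤ g x} ≤ ENNReal.ofReal (C * ((1 + t)^2)⁻¹) := by
    intro t ht
    have ht' : (0:ℝ) < t := ht
    have h1t : (0:ℝ) < 1 + t := by linarith
    rcases le_or_gt t t₀ with hcase | hcase
    · -- small t : use P ≤ 1
      have h1 : P {x | t ≤ g x} ≤ 1 := prob_le_one
      have h2 : (1:ℝ) ≤ C * ((1 + t)^2)⁻¹ := by
        have hle : (1 + t)^2 ≤ C := le_trans (by nlinarith) (le_max_right _ _)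
        calc (1:ℝ) = (1+t)^2 * ((1+t)^2)⁻¹ := by field_simp
          _ ≤ C * ((1+t)^2)⁻¹ := mul_le_mul_of_nonneg_right hle (by positivity)
      calc P {x | t ≤ g x} ≤ 1 := h1
        _ = ENNReal.ofReal 1 := by simp
        _ ≤ ENNReal.ofReal (C * ((1 + t)^2)⁻¹) := ENNReal.ofReal_le_ofReal h2
    · -- large t : use the tail bound
      have hL : Real.log (1 + t) = Real.log (1 + t) := rfl
      set L := Real.log (1 + t) with hLdef
      have hexpL : Real.exp L = 1 + t := Real.exp_log h1t
      have hL_ge : ν (1/2) ≤ L := by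
        have : Real.exp (ν (1/2)) ≤ 1 + t := by simp only [ht₀_def] at hcase; linarith
        have := Real.log_le_log (Real.exp_pos _) this
        rwa [Real.log_exp] at this
      have hL_nonneg : 0 ≤ L := le_trans (hν_nonneg _ (by norm_num)) hL_ge
      -- find u ≥ 0 with ν u = L by IVT
      obtain ⟨b₀, hb₀⟩ := (hνtop.eventually_ge_atTop L).exists
      set b : ℝ := |b₀| with hbdef
      have hb : L ≤ ν b := by
        rcases abs_choice b₀ with h | h
        · rw [hbdef, h]; exact hb₀
        · rw [hbdef, h, hνeven]; exact hb₀
      have hb0 : (0:ℝ) ≤ b := abs_nonneg b₀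
      have hIVT : L ∈ ν '' Icc 0 b := by
        apply intermediate_value_Icc hb0 hνcont.continuousOn
        exact ⟨by rw [hν0]; exact hL_nonneg, hb⟩
      obtain ⟨u, hu_mem, hu⟩ := hIVT
      have hu0 : 0 ≤ u := hu_mem.1
      have hu_half : 1/2 ≤ u := by
        by_contra hlt
        push_neg at hlt
        have := hνmono hu0 (by norm_num : (1/2:ℝ) ∈ Ici 0) hlt
        rw [hu] at this
        linarith
      -- set inclusion
      have hsub : {x | t ≤ g x} ⊆ {x | 2 * u ≤ |f x|} := by
        intro x hx
        simp only [mem_setOf_eq, hg_def] at hx ⊢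
        have h1 : Real.exp L ≤ Real.exp (ν (|f x| / 2)) := by rw [hexpL]; linarith
        have h2 : L ≤ ν (|f x| / 2) := by
          have := Real.log_le_log (Real.exp_pos _) h1
          rwa [Real.log_exp, Real.log_exp] at this
        have h3 : u ≤ |f x| / 2 := by
          by_contra hlt
          push_neg at hlt
          have := hνmono (mem_Ici.2 (by positivity) : |f x|/2 ∈ Ici (0:ℝ)) (hu0 : u ∈ Ici (0:ℝ)) hlt
          rw [hu] at this
          linarith
        linarith
      have h2u : (1:ℝ) ≤ 2 * u := by linarith
      have htail' := htail (2 * u) h2u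
      have hexp_le : C₁ * Real.exp (-ν (2 * u)) ≤ C * ((1 + t)^2)⁻¹ := by
        have h1 : Real.exp (-ν (2*u)) ≤ Real.exp (-(2*L)) := by
          apply Real.exp_le_exp.2
          have := hdouble u
          rw [hu] at this
          linarith
        have h2 : Real.exp (-(2*L)) = ((1 + t)^2)⁻¹ := by
          rw [Real.exp_neg]
          congr 1
          rw [show (2:ℝ) * L = (2:ℕ) * L by norm_num, Real.exp_nat_mul, hexpL]
        calc C₁ * Real.exp (-ν (2*u)) ≤ C₁ * ((1 + t)^2)⁻¹ := by
              rw [← h2]; exact mul_le_mul_of_nonneg_left h1 hC₁.le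
          _ ≤ C * ((1 + t)^2)⁻¹ := by
              apply mul_le_mul_of_nonneg_right (le_max_left _ _) (by positivity)
      calc P {x | t ≤ g x} ≤ P {x | 2 * u ≤ |f x|} := measure_mono hsub
        _ = tailFn P f (2 * u) := rfl
        _ ≤ ENNReal.ofReal (C₁ * Real.exp (-ν (2*u))) := htail'
        _ ≤ ENNReal.ofReal (C * ((1 + t)^2)⁻¹) := ENNReal.ofReal_le_ofReal hexp_le
  -- now finish: the dominating function has finite integral on Ioi 0
  have hmeasB : Measurable fun t : ℝ => ENNReal.ofReal (C * ((1 + t)^2)⁻¹) :=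
    (((measurable_const.add measurable_id).pow_const 2).inv.const_mul C).ennreal_ofReal
  have step1 : ∫⁻ t in Ioi (0:ℝ), P {x | t ≤ g x}
      ≤ ∫⁻ t in Ioi (0:ℝ), ENNReal.ofReal (C * ((1 + t)^2)⁻¹) :=
    setLIntegral_mono hmeasB key
  refine lt_of_le_of_lt step1 ?_
  -- split Ioi 0 = Ioc 0 1 ∪ Ioi 1
  have hsplit : Ioi (0:ℝ) = Ioc 0 1 ∪ Ioi 1 := (Ioc_union_Ioi_eq_Ioi (by norm_num)).symm
  rw [hsplit, lintegral_union measurableSet_Ioi (Ioc_disjoint_Ioi le_rfl)]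
  apply ENNReal.add_lt_top.2
  constructor
  · -- bounded piece
    have : ∫⁻ t in Ioc (0:ℝ) 1, ENNReal.ofReal (C * ((1 + t)^2)⁻¹)
        ≤ ∫⁻ _ in Ioc (0:ℝ) 1, ENNReal.ofReal C := by
      apply setLIntegral_mono measurable_const
      intro t ht
      apply ENNReal.ofReal_le_ofReal
      have h1t : (1:ℝ) ≤ (1 + t)^2 := by nlinarith [ht.1]
      calc C * ((1 + t)^2)⁻¹ ≤ C * 1 := by
            apply mul_le_mul_of_nonneg_left _ hC_pos.le
            rw [inv_le_one_iff₀]; right; exact h1t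
        _ = C := mul_one C
    refine lt_of_le_of_lt this ?_
    rw [setLIntegral_const, Real.volume_Ioc]
    exact ENNReal.mul_lt_top ENNReal.ofReal_lt_top (by simp)
  · -- tail piece: compare with t^{-2}
    have hint : IntegrableOn (fun t : ℝ => C * ((1 + t)^2)⁻¹) (Ioi 1) := by
      have base : IntegrableOn (fun t : ℝ => t ^ (-2:ℝ)) (Ioi 1) :=
        integrableOn_Ioi_rpow_of_lt (by norm_num) one_pos
      have base' : IntegrableOn (fun t : ℝ => (t^2)⁻¹) (Ioi 1) := by
        apply base.congr_fun _ measurableSet_Ioi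
        intro t ht
        have ht0 : (0:ℝ) < t := lt_trans one_pos ht
        show (t:ℝ) ^ (-2:ℝ) = (t^2)⁻¹
        rw [show (-2:ℝ) = -((2:ℕ):ℝ) by norm_num, Real.rpow_neg ht0.le, Real.rpow_natCast]
      have hmono : IntegrableOn (fun t : ℝ => ((1 + t)^2)⁻¹) (Ioi 1) := by
        apply Integrable.mono' base'
        · apply Measurable.aestronglyMeasurable
          exact ((measurable_const.add measurable_id).pow_const 2).inv
        · filter_upwards [ae_restrict_mem measurableSet_Ioi] with t ht
          have ht0 : (0:ℝ) < t := lt_trans one_pos ht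
          rw [Real.norm_eq_abs, abs_of_nonneg (by positivity)]
          apply inv_anti₀ (by positivity)
          nlinarith
      exact hmono.const_mul C
    have := hint.setLIntegral_lt_top
    exact this
end

section
/- Let Φ(u) = e^{ν(u)} - 1 be an exponential Young function. A measurable function f on a probability space satisfies sup_{t>0} Φ(t/c)·T_f(t) < ∞ for every c > 0 if and only if ∫ Φ(k|f|) dP < ∞ for every k > 0. -/
/-!
Write `Φ(u) = exp (ν u) - 1`. One direction is Markov's inequality:
`Φ(t/c) T_f(t) ≤ ∫ Φ(|f|/c)`. For the other, cut `X` into the slabs `n ≤ k|f| < n + 1`, so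
`∫ Φ(k|f|) ≤ Φ(1) + ∑_{n ≥ 1} Φ(n+1) T_f(n/k)`. Convexity and `ν 0 = 0` give
`ν (s x) ≥ s ν x` for `s ≥ 1`, hence `Φ(x) ≤ exp (-ν x) Φ(2x)` and
`Φ(n+1) ≤ Φ(2n) ≤ exp (-ν 2) ^ n Φ(4n)`. With `c = 1/(4k)` the weak-type bound controls
`Φ(4n) T_f(n/k)` uniformly, so the series is dominated by a geometric one.
-/

open MeasureTheory ENNReal Set Filter

theorem ConvexOn.mul_le_comp_mul {ν : ℝ → ℝ} (hν : ConvexOn ℝ (Ici 0) ν) (h0 : ν 0 = 0)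
    {s x : ℝ} (hs : 1 ≤ s) (hx : 0 ≤ x) : s * ν x ≤ ν (s * x) := by
  have hs0 : 0 < s := by linarith
  have h := hν.2 (mem_Ici.2 (by positivity : 0 ≤ s * x)) (mem_Ici.2 le_rfl)
    (inv_nonneg.2 hs0.le) (sub_nonneg.2 (inv_le_one_of_one_le₀ hs)) (by ring)
  simp only [smul_eq_mul, mul_zero, add_zero, h0, inv_mul_cancel_left₀ hs0.ne'] at h
  rwa [le_inv_mul_iff₀ hs0] at h

theorem MonotoneOn.map_nonneg {ν : ℝ → ℝ} (hmono : MonotoneOn ν (Ici 0)) (h0 : ν 0 = 0)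
    {x : ℝ} (hx : 0 ≤ x) : 0 ≤ ν x :=
  h0 ▸ hmono (mem_Ici.2 le_rfl) hx hx

section ExpYoung

variable {ν : ℝ → ℝ} (hν : ConvexOn ℝ (Ici 0) ν) (h0 : ν 0 = 0) (hmono : MonotoneOn ν (Ici 0))
include hν h0 hmono

theorem exp_sub_one_le_exp_neg_mul_exp_two_mul_sub_one {x : ℝ} (hx : 0 ≤ x) :
    Real.exp (ν x) - 1 ≤ Real.exp (-ν x) * (Real.exp (ν (2 * x)) - 1) := by
  have hνx : 0 ≤ ν x := hmono.map_nonneg h0 hx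
  have hsq : Real.exp (ν x) ^ 2 ≤ Real.exp (ν (2 * x)) := by
    rw [← Real.exp_nat_mul]
    exact Real.exp_le_exp.2 (hν.mul_le_comp_mul h0 (by norm_num) hx)
  have hneg : Real.exp (-ν x) ≤ 1 := Real.exp_le_one_iff.2 (neg_nonpos.2 hνx)
  have hprod : Real.exp (-ν x) * Real.exp (ν x) = 1 := by rw [← Real.exp_add]; simp
  calc Real.exp (ν x) - 1 ≤ Real.exp (ν x) - Real.exp (-ν x) := by linarith
    _ = Real.exp (-ν x) * (Real.exp (ν x) ^ 2 - 1) := by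
        linear_combination -Real.exp (ν x) * hprod
    _ ≤ Real.exp (-ν x) * (Real.exp (ν (2 * x)) - 1) := by gcongr

theorem exp_sub_one_succ_le_pow_mul {n : ℕ} (hn : 1 ≤ n) :
    Real.exp (ν (n + 1)) - 1 ≤ Real.exp (-ν 2) ^ n * (Real.exp (ν (4 * n)) - 1) := by
  have hn' : (1 : ℝ) ≤ n := by exact_mod_cast hn
  have hsucc : ν (n + 1) ≤ ν (2 * n) :=
    hmono (mem_Ici.2 (by positivity)) (mem_Ici.2 (by positivity)) (by linarith)
  have hdecay : Real.exp (-ν (2 * n)) ≤ Real.exp (-ν 2) ^ n := by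
    rw [← Real.exp_nat_mul, Real.exp_le_exp, mul_neg, neg_le_neg_iff, mul_comm 2]
    exact hν.mul_le_comp_mul h0 hn' zero_le_two
  calc Real.exp (ν (n + 1)) - 1 ≤ Real.exp (ν (2 * n)) - 1 := by gcongr
    _ ≤ Real.exp (-ν (2 * n)) * (Real.exp (ν (2 * (2 * n))) - 1) :=
        exp_sub_one_le_exp_neg_mul_exp_two_mul_sub_one hν h0 hmono (by positivity)
    _ ≤ Real.exp (-ν 2) ^ n * (Real.exp (ν (4 * n)) - 1) := by
        rw [← mul_assoc, show (2 : ℝ) * 2 = 4 by norm_num]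
        have : 0 ≤ Real.exp (ν (4 * n)) - 1 :=
          sub_nonneg.2 (Real.one_le_exp (hmono.map_nonneg h0 (by positivity)))
        gcongr

end ExpYoung

section Tail

variable {X : Type*} [MeasurableSpace X] (μ : Measure X) (f : X → ℝ)

theorem lintegral_comp_div_le_tsum_mul_tailFn {F : ℝ → ℝ≥0∞} (hF : MonotoneOn F (Ici 0))
    {c : ℝ} (hc : 0 < c) :
    ∫⁻ x, F (|f x| / c) ∂μ ≤ ∑' n : ℕ, F (n + 1) * tailFn μ f (n * c) := by
  let slab (n : ℕ) : Set X := {x | n ≤ |f x| / c ∧ |f x| / c < n + 1}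
  have hcover : ⋃ n, slab n = univ := eq_univ_of_forall fun x =>
    mem_iUnion.2 ⟨⌊|f x| / c⌋₊, Nat.floor_le (by positivity), Nat.lt_floor_add_one _⟩
  calc ∫⁻ x, F (|f x| / c) ∂μ = ∫⁻ x in ⋃ n, slab n, F (|f x| / c) ∂μ := by
        rw [hcover, Measure.restrict_univ]
    _ ≤ ∑' n, ∫⁻ x in slab n, F (|f x| / c) ∂μ := lintegral_iUnion_le _ _
    _ ≤ ∑' n : ℕ, ∫⁻ _ in slab n, F (n + 1) ∂μ := by
        refine ENNReal.tsum_le_tsum fun n => setLIntegral_mono measurable_const fun x hx => ?_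
        exact hF (mem_Ici.2 (by positivity)) (mem_Ici.2 (by positivity)) hx.2.le
    _ ≤ ∑' n : ℕ, F (n + 1) * tailFn μ f (n * c) := by
        gcongr with n
        rw [setLIntegral_const]
        gcongr
        exact measure_mono fun x hx => (le_div_iff₀ hc).1 hx.1

theorem mul_tailFn_le_lintegral (hf : Measurable f) {F : ℝ → ℝ≥0∞} (hF : MonotoneOn F (Ici 0))
    (hFm : Measurable F) {t : ℝ} (ht : 0 ≤ t) :
    F t * tailFn μ f t ≤ ∫⁻ x, F |f x| ∂μ :=
  calc F t * tailFn μ f t ≤ F t * μ {x | F t ≤ F |f x|} := by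
        gcongr
        exact measure_mono fun x hx => hF (mem_Ici.2 ht) (mem_Ici.2 (abs_nonneg _)) hx
    _ ≤ ∫⁻ x, F |f x| ∂μ := mul_meas_ge_le_lintegral₀ (hFm.comp hf.abs).aemeasurable _

end Tail

theorem MonotoneOn.ofReal_exp_sub_one {ν : ℝ → ℝ} (hmono : MonotoneOn ν (Ici 0)) :
    MonotoneOn (fun u => ENNReal.ofReal (Real.exp (ν u) - 1)) (Ici 0) :=
  fun _ hu _ hv huv => by dsimp only; gcongr; exact hmono hu hv huv

section Equivalence

variable {X : Type*} [MeasurableSpace X] (μ : Measure X) (f : X → ℝ) {ν : ℝ → ℝ}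

theorem iSup_mul_tailFn_lt_top_of_lintegral_lt_top (hcont : Continuous ν)
    (hmono : MonotoneOn ν (Ici 0)) (hf : Measurable f) {c : ℝ} (hc : 0 < c)
    (hI : ∫⁻ x, ENNReal.ofReal (Real.exp (ν (c⁻¹ * |f x|)) - 1) ∂μ < ⊤) :
    (⨆ t ∈ Ioi (0 : ℝ), ENNReal.ofReal (Real.exp (ν (t / c)) - 1) * tailFn μ f t) < ⊤ := by
  have hscale : MonotoneOn (c⁻¹ * ·) (Ici 0) := fun _ _ _ _ h =>
    mul_le_mul_of_nonneg_left h (inv_nonneg.2 hc.le)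
  have hmaps : MapsTo (c⁻¹ * ·) (Ici 0) (Ici 0) := fun u hu => by
    simp only [mem_Ici] at hu ⊢; positivity
  refine lt_of_le_of_lt (iSup₂_le fun t ht => ?_) hI
  rw [div_eq_inv_mul]
  exact mul_tailFn_le_lintegral μ f hf (hmono.ofReal_exp_sub_one.comp hscale hmaps)
    (by fun_prop) (le_of_lt ht)

theorem lintegral_lt_top_of_iSup_mul_tailFn_lt_top [IsFiniteMeasure μ]
    (hν : ConvexOn ℝ (Ici 0) ν) (h0 : ν 0 = 0) (hmono : StrictMonoOn ν (Ici 0)) {k : ℝ}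
    (hk : 0 < k)
    (hS : (⨆ t ∈ Ioi (0 : ℝ),
      ENNReal.ofReal (Real.exp (ν (t / (4 * k)⁻¹)) - 1) * tailFn μ f t) < ⊤) :
    ∫⁻ x, ENNReal.ofReal (Real.exp (ν (k * |f x|)) - 1) ∂μ < ⊤ := by
  set S := ⨆ t ∈ Ioi (0 : ℝ), ENNReal.ofReal (Real.exp (ν (t / (4 * k)⁻¹)) - 1) * tailFn μ f t
  set F : ℝ → ℝ≥0∞ := fun u => ENNReal.ofReal (Real.exp (ν u) - 1)
  set r := ENNReal.ofReal (Real.exp (-ν 2))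
  have hr : r < 1 := by
    have : ν 0 < ν 2 := hmono (mem_Ici.2 le_rfl) (mem_Ici.2 zero_le_two) zero_lt_two
    simpa [r, h0] using this
  have hterm (n : ℕ) (hn : 1 ≤ n) : F (n + 1) * tailFn μ f (n * k⁻¹) ≤ r ^ n * S := by
    have hn' : (0 : ℝ) < n := by exact_mod_cast hn
    have hpos : 0 < (n : ℝ) * k⁻¹ := by positivity
    calc F (n + 1) * tailFn μ f (n * k⁻¹)
        ≤ ENNReal.ofReal (Real.exp (-ν 2) ^ n * (Real.exp (ν (4 * n)) - 1)) *
            tailFn μ f (n * k⁻¹) := by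
          gcongr
          exact ENNReal.ofReal_le_ofReal
            (exp_sub_one_succ_le_pow_mul hν h0 hmono.monotoneOn hn)
      _ = r ^ n * (F (n * k⁻¹ / (4 * k)⁻¹) * tailFn μ f (n * k⁻¹)) := by
          rw [ENNReal.ofReal_mul (by positivity), ENNReal.ofReal_pow (Real.exp_pos _).le,
            mul_assoc]
          congr 4
          field_simp
      _ ≤ r ^ n * S := by
          gcongr
          exact le_iSup₂_of_le
            (f := fun t (_ : t ∈ Ioi (0 : ℝ)) => F (t / (4 * k)⁻¹) * tailFn μ f t) _ hpos le_rfl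
  calc ∫⁻ x, F (k * |f x|) ∂μ = ∫⁻ x, F (|f x| / k⁻¹) ∂μ := by
        simp only [div_inv_eq_mul, mul_comm]
    _ ≤ ∑' n : ℕ, F (n + 1) * tailFn μ f (n * k⁻¹) :=
        lintegral_comp_div_le_tsum_mul_tailFn μ f hmono.monotoneOn.ofReal_exp_sub_one
          (inv_pos.2 hk)
    _ = F 1 * tailFn μ f 0 +
          ∑' n : ℕ, F ((n + 1 : ℕ) + 1) * tailFn μ f ((n + 1 : ℕ) * k⁻¹) := by
        rw [tsum_eq_zero_add' ENNReal.summable]; simp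
    _ ≤ F 1 * μ univ + ∑' n : ℕ, r ^ (n + 1) * S := by
        gcongr ?_ + ?_
        · exact mul_le_mul_right (measure_mono (subset_univ _)) _
        · exact ENNReal.tsum_le_tsum fun n => hterm (n + 1) n.succ_pos
    _ < ⊤ := by
        have hgeom : ∑' n : ℕ, r ^ (n + 1) < ⊤ := by
          simp_rw [pow_succ', ENNReal.tsum_mul_left]
          exact ENNReal.mul_lt_top (hr.trans ENNReal.one_lt_top) (tsum_geometric_lt_top.2 hr)
        rw [ENNReal.tsum_mul_right]
        exact ENNReal.add_lt_top.2
          ⟨ENNReal.mul_lt_top ENNReal.ofReal_lt_top (measure_lt_top μ univ),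
            ENNReal.mul_lt_top hgeom hS⟩

end Equivalence

theorem stmt11_general {X : Type*} [MeasurableSpace X] (P : Measure X) [IsProbabilityMeasure P]
    (ν : ℝ → ℝ) (hνconv : ConvexOn ℝ Set.univ ν)
    (hνcont : Continuous ν) (hνmono : StrictMonoOn ν (Set.Ici 0)) (hν0 : ν 0 = 0)
    (f : X → ℝ) (hf : Measurable f) :
    (∀ c : ℝ, 0 < c →
        (⨆ t ∈ Set.Ioi (0:ℝ),
          ENNReal.ofReal (Real.exp (ν (t / c)) - 1) * tailFn P f t) < ⊤)
      ↔ (∀ k : ℝ, 0 < k →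
        ∫⁻ x, ENNReal.ofReal (Real.exp (ν (k * |f x|)) - 1) ∂P < ⊤) := by
  have hconv : ConvexOn ℝ (Ici 0) ν := hνconv.subset (subset_univ _) (convex_Ici 0)
  refine ⟨fun h k hk => ?_, fun h c hc => ?_⟩
  · exact lintegral_lt_top_of_iSup_mul_tailFn_lt_top P f hconv hν0 hνmono hk
      (h _ (by positivity))
  · exact iSup_mul_tailFn_lt_top_of_lintegral_lt_top P f hνcont hνmono.monotoneOn hf hc
      (h _ (inv_pos.2 hc))

theorem stmt11 {X : Type*} [MeasurableSpace X] (P : Measure X) [IsProbabilityMeasure P]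
    (ν : ℝ → ℝ) (hνeven : ∀ u, ν (-u) = ν u) (hνconv : ConvexOn ℝ Set.univ ν)
    (hνcont : Continuous ν) (hνmono : StrictMonoOn ν (Set.Ici 0)) (hν0 : ν 0 = 0)
    (hνtop : Filter.Tendsto ν Filter.atTop Filter.atTop)
    (f : X → ℝ) (hf : Measurable f) :
    (∀ c : ℝ, 0 < c →
        (⨆ t ∈ Set.Ioi (0:ℝ),
          ENNReal.ofReal (Real.exp (ν (t / c)) - 1) * tailFn P f t) < ⊤)
      ↔ (∀ k : ℝ, 0 < k →
        ∫⁻ x, ENNReal.ofReal (Real.exp (ν (k * |f x|)) - 1) ∂P < ⊤) :=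
  stmt11_general P ν hνconv hνcont hνmono hν0 f hf
end

section
/- Let p₀ > 1, Δ ≥ 0, and suppose a random variable f on a probability space satisfies T_f(t) ≤ t^{-p₀} (log t)^{Δ} for all t > 2. Then for every p ∈ [1, p₀), E|f|^p < ∞, and as p → p₀⁻, ||f||_p ≤ C · (p₀ - p)^{-(1+Δ)/p₀} for some constant C depending only on p₀ and Δ. -/
open MeasureTheory ENNReal Set Filter

lemma log_le_div_exp {x : ℝ} (hx : 0 < x) : Real.log x ≤ x / Real.exp 1 := by
  have h := Real.log_le_sub_one_of_pos (show 0 < x / Real.exp 1 by positivity)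
  rw [Real.log_div hx.ne' (Real.exp_pos 1).ne', Real.log_exp] at h
  linarith

lemma logpow_le {Δ a t : ℝ} (hΔ : 0 ≤ Δ) (ha : 0 < a) (ht : 1 ≤ t) :
    Real.log t ^ Δ ≤ (Δ / (Real.exp 1 * a)) ^ Δ * t ^ a := by
  rcases eq_or_lt_of_le hΔ with h0 | hΔ'
  · rw [← h0]
    simpa using Real.one_le_rpow ht ha.le
  · have ht0 : (0:ℝ) < t := lt_of_lt_of_le one_pos ht
    have hu : (0:ℝ) < t ^ (a / Δ) := Real.rpow_pos_of_pos ht0 _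
    have hlog : Real.log t ≤ (Δ / (Real.exp 1 * a)) * t ^ (a / Δ) := by
      have h1 : Real.log (t ^ (a / Δ)) ≤ t ^ (a / Δ) / Real.exp 1 := log_le_div_exp hu
      rw [Real.log_rpow ht0] at h1
      have : Real.log t = (Δ / a) * ((a / Δ) * Real.log t) := by
        field_simp
      rw [this]
      calc (Δ / a) * ((a / Δ) * Real.log t) ≤ (Δ / a) * (t ^ (a / Δ) / Real.exp 1) := by
            apply mul_le_mul_of_nonneg_left h1 (by positivity)
        _ = (Δ / (Real.exp 1 * a)) * t ^ (a / Δ) := by ring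
    have hlognn : 0 ≤ Real.log t := Real.log_nonneg ht
    calc Real.log t ^ Δ ≤ ((Δ / (Real.exp 1 * a)) * t ^ (a / Δ)) ^ Δ :=
          Real.rpow_le_rpow hlognn hlog hΔ
      _ = (Δ / (Real.exp 1 * a)) ^ Δ * (t ^ (a / Δ)) ^ Δ :=
          Real.mul_rpow (by positivity) hu.le
      _ = (Δ / (Real.exp 1 * a)) ^ Δ * t ^ a := by
          rw [← Real.rpow_mul ht0.le]
          congr 1
          field_simp

lemma neg_mul_log_le {x : ℝ} (hx : 0 < x) : -x * Real.log x ≤ 1 := by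
  have h := log_le_div_exp (inv_pos.mpr hx)
  rw [Real.log_inv] at h
  have he : (1:ℝ) ≤ Real.exp 1 := by
    have := Real.add_one_le_exp (1:ℝ); linarith
  have h2 : -Real.log x ≤ x⁻¹ := by
    calc -Real.log x ≤ x⁻¹ / Real.exp 1 := h
      _ ≤ x⁻¹ / 1 := by apply div_le_div_of_nonneg_left (by positivity) one_pos he
      _ = x⁻¹ := by ring
  calc -x * Real.log x = x * (-Real.log x) := by ring
    _ ≤ x * x⁻¹ := mul_le_mul_of_nonneg_left h2 hx.le
    _ = 1 := mul_inv_cancel₀ hx.ne'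

theorem stmt15 {X : Type*} [MeasurableSpace X] (P : Measure X) [IsProbabilityMeasure P]
    (f : X → ℝ) (hf : Measurable f) (p₀ Δ : ℝ) (hp₀ : 1 < p₀) (hΔ : 0 ≤ Δ)
    (htail : ∀ t : ℝ, 2 < t →
      tailFn P f t ≤ ENNReal.ofReal (t ^ (-p₀) * (Real.log t) ^ Δ)) :
    (∀ p ∈ Set.Ico (1:ℝ) p₀, ∫⁻ x, ENNReal.ofReal (|f x| ^ p) ∂P < ⊤) ∧
    ∃ C : ℝ, 0 < C ∧ ∀ p ∈ Set.Ico (1:ℝ) p₀,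
      (∫⁻ x, ENNReal.ofReal (|f x| ^ p) ∂P) ^ ((1:ℝ)/p)
        ≤ ENNReal.ofReal (C * (p₀ - p) ^ (-(1 + Δ) / p₀)) := by

  have hexp1 : (1:ℝ) ≤ Real.exp 1 := by
    have := Real.add_one_le_exp (1:ℝ); linarith
  set C₁ := p₀ * (2 ^ p₀ * (p₀ - 1) ^ (1 + Δ) + 2 * (2 * Δ / Real.exp 1) ^ Δ) + 1 with hC₁def
  have hC₁1 : 1 ≤ C₁ := by
    have h1 : (0:ℝ) ≤ 2 ^ p₀ * (p₀ - 1) ^ (1 + Δ) :=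
      mul_nonneg (Real.rpow_nonneg (by norm_num) _) (Real.rpow_nonneg (by linarith) _)
    have h2 : (0:ℝ) ≤ 2 * (2 * Δ / Real.exp 1) ^ Δ := by positivity
    have h3 : (0:ℝ) ≤ p₀ * (2 ^ p₀ * (p₀ - 1) ^ (1 + Δ) + 2 * (2 * Δ / Real.exp 1) ^ Δ) :=
      mul_nonneg (by linarith) (by linarith)
    rw [hC₁def]; linarith
  have key : ∀ p ∈ Set.Ico (1:ℝ) p₀,
      ∫⁻ x, ENNReal.ofReal (|f x| ^ p) ∂P ≤ ENNReal.ofReal (C₁ * (p₀ - p) ^ (-(1 + Δ))) := by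
    rintro p ⟨hp1, hpp⟩
    have hx0 : 0 < p₀ - p := by linarith
    have hp0 : (0:ℝ) < p := by linarith
    rw [MeasureTheory.lintegral_rpow_eq_lintegral_meas_le_mul P
      (Filter.Eventually.of_forall fun y => abs_nonneg (f y)) hf.abs.aemeasurable hp0]
    have hsplit : Ioi (0:ℝ) = Ioc 0 2 ∪ Ioi 2 := (Ioc_union_Ioi_eq_Ioi (by norm_num)).symm
    rw [hsplit, lintegral_union measurableSet_Ioi (Set.Ioc_disjoint_Ioi le_rfl)]
    set K := (2 * Δ / Real.exp 1) ^ Δ * (p₀ - p) ^ (-Δ) with hKdef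
    have hK0 : 0 ≤ K := by positivity
    have h1 : ∫⁻ t in Ioc (0:ℝ) 2, P {a | t ≤ |f a|} * ENNReal.ofReal (t ^ (p - 1))
        ≤ ENNReal.ofReal (2 ^ p₀) := by
      calc ∫⁻ t in Ioc (0:ℝ) 2, P {a | t ≤ |f a|} * ENNReal.ofReal (t ^ (p - 1))
          ≤ ∫⁻ _ in Ioc (0:ℝ) 2, ENNReal.ofReal (2 ^ (p - 1)) := by
            apply setLIntegral_mono' measurableSet_Ioc
            intro t ht
            calc P {a | t ≤ |f a|} * ENNReal.ofReal (t ^ (p - 1))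
                ≤ 1 * ENNReal.ofReal (2 ^ (p - 1)) :=
                  mul_le_mul' prob_le_one
                    (ENNReal.ofReal_le_ofReal (Real.rpow_le_rpow ht.1.le ht.2 (by linarith)))
              _ = ENNReal.ofReal (2 ^ (p - 1)) := one_mul _
        _ = ENNReal.ofReal (2 ^ (p - 1)) * volume (Ioc (0:ℝ) 2) := setLIntegral_const _ _
        _ = ENNReal.ofReal (2 ^ (p - 1)) * ENNReal.ofReal 2 := by
            rw [Real.volume_Ioc]; norm_num
        _ = ENNReal.ofReal (2 ^ (p - 1) * 2) :=
            (ENNReal.ofReal_mul (Real.rpow_nonneg (by norm_num) _)).symm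
        _ ≤ ENNReal.ofReal (2 ^ p₀) := by
            apply ENNReal.ofReal_le_ofReal
            have : (2:ℝ) ^ (p - 1) * 2 = 2 ^ ((p - 1) + 1) := by
              rw [Real.rpow_add (by norm_num : (0:ℝ) < 2), Real.rpow_one]
            rw [this]
            exact Real.rpow_le_rpow_of_exponent_le (by norm_num) (by linarith)
    set q : ℝ := -1 - (p₀ - p) / 2 with hqdef
    have hq1 : q < -1 := by rw [hqdef]; linarith
    have h2 : ∫⁻ t in Ioi (2:ℝ), P {a | t ≤ |f a|} * ENNReal.ofReal (t ^ (p - 1))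
        ≤ ENNReal.ofReal (K * (2 / (p₀ - p))) := by
      have pt : ∀ t ∈ Ioi (2:ℝ), P {a | t ≤ |f a|} * ENNReal.ofReal (t ^ (p - 1))
          ≤ ENNReal.ofReal (K * t ^ q) := by
        intro t ht
        have ht2 : (2:ℝ) < t := ht
        have ht0 : (0:ℝ) < t := by linarith
        have htail' : P {a | t ≤ |f a|} ≤ ENNReal.ofReal (t ^ (-p₀) * Real.log t ^ Δ) :=
          htail t ht2
        calc P {a | t ≤ |f a|} * ENNReal.ofReal (t ^ (p - 1))
            ≤ ENNReal.ofReal (t ^ (-p₀) * Real.log t ^ Δ) * ENNReal.ofReal (t ^ (p - 1)) :=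
              mul_le_mul_left htail' _
          _ = ENNReal.ofReal (t ^ (-p₀) * Real.log t ^ Δ * t ^ (p - 1)) :=
              (ENNReal.ofReal_mul (mul_nonneg (Real.rpow_nonneg ht0.le _)
                (Real.rpow_nonneg (Real.log_nonneg (by linarith)) _))).symm
          _ ≤ ENNReal.ofReal (K * t ^ q) := by
              apply ENNReal.ofReal_le_ofReal
              have hlog : Real.log t ^ Δ
                  ≤ (Δ / (Real.exp 1 * ((p₀ - p) / 2))) ^ Δ * t ^ ((p₀ - p) / 2) :=
                logpow_le hΔ (by linarith) (by linarith)
              have hKeq : (Δ / (Real.exp 1 * ((p₀ - p) / 2))) ^ Δ = K := by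
                rw [hKdef]
                rw [show Δ / (Real.exp 1 * ((p₀ - p) / 2))
                    = (2 * Δ / Real.exp 1) * (p₀ - p)⁻¹ by field_simp]
                rw [Real.mul_rpow (by positivity) (by positivity),
                  Real.inv_rpow hx0.le, ← Real.rpow_neg hx0.le]
              calc t ^ (-p₀) * Real.log t ^ Δ * t ^ (p - 1)
                  ≤ t ^ (-p₀) * ((Δ / (Real.exp 1 * ((p₀ - p) / 2))) ^ Δ
                      * t ^ ((p₀ - p) / 2)) * t ^ (p - 1) := by
                    apply mul_le_mul_of_nonneg_right
                      (mul_le_mul_of_nonneg_left hlog (Real.rpow_nonneg ht0.le _))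
                      (Real.rpow_nonneg ht0.le _)
                _ = K * (t ^ (-p₀) * t ^ ((p₀ - p) / 2) * t ^ (p - 1)) := by
                    rw [hKeq]; ring
                _ = K * t ^ q := by
                    rw [← Real.rpow_add ht0, ← Real.rpow_add ht0]
                    congr 1
                    rw [hqdef]; ring
      calc ∫⁻ t in Ioi (2:ℝ), P {a | t ≤ |f a|} * ENNReal.ofReal (t ^ (p - 1))
          ≤ ∫⁻ t in Ioi (2:ℝ), ENNReal.ofReal (K * t ^ q) :=
            setLIntegral_mono' measurableSet_Ioi pt
        _ = ENNReal.ofReal (∫ t in Ioi (2:ℝ), K * t ^ q) := by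
            rw [← MeasureTheory.ofReal_integral_eq_lintegral_ofReal]
            · exact (integrableOn_Ioi_rpow_of_lt hq1 (by norm_num)).const_mul K
            · filter_upwards [ae_restrict_mem measurableSet_Ioi] with t ht
              have ht0 : (0:ℝ) < t := by
                have : (2:ℝ) < t := ht
                linarith
              exact mul_nonneg hK0 (Real.rpow_nonneg ht0.le _)
        _ = ENNReal.ofReal (K * (-(2:ℝ) ^ (q + 1) / (q + 1))) := by
            rw [MeasureTheory.integral_const_mul, integral_Ioi_rpow_of_lt hq1 (by norm_num)]
        _ ≤ ENNReal.ofReal (K * (2 / (p₀ - p))) := by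
            apply ENNReal.ofReal_le_ofReal
            apply mul_le_mul_of_nonneg_left _ hK0
            have hq2 : q + 1 = -((p₀ - p) / 2) := by rw [hqdef]; ring
            rw [hq2]
            have hb : (2:ℝ) ^ (-((p₀ - p) / 2)) ≤ 1 :=
              Real.rpow_le_one_of_one_le_of_nonpos (by norm_num) (by linarith)
            have heq : -(2:ℝ) ^ (-((p₀ - p) / 2)) / -((p₀ - p) / 2)
                = (2:ℝ) ^ (-((p₀ - p) / 2)) * (2 / (p₀ - p)) := by
              rw [div_neg, neg_div, neg_neg]
              rw [div_div_eq_mul_div, mul_div_assoc]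
            rw [heq]
            calc (2:ℝ) ^ (-((p₀ - p) / 2)) * (2 / (p₀ - p))
                ≤ 1 * (2 / (p₀ - p)) := mul_le_mul_of_nonneg_right hb (by positivity)
              _ = 2 / (p₀ - p) := one_mul _
    calc ENNReal.ofReal p * ((∫⁻ t in Ioc (0:ℝ) 2, P {a | t ≤ |f a|} * ENNReal.ofReal (t ^ (p - 1)))
            + ∫⁻ t in Ioi (2:ℝ), P {a | t ≤ |f a|} * ENNReal.ofReal (t ^ (p - 1)))
        ≤ ENNReal.ofReal p₀ * (ENNReal.ofReal (2 ^ p₀) + ENNReal.ofReal (K * (2 / (p₀ - p)))) :=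
          mul_le_mul' (ENNReal.ofReal_le_ofReal (by linarith)) (add_le_add h1 h2)
      _ = ENNReal.ofReal (p₀ * (2 ^ p₀ + K * (2 / (p₀ - p)))) := by
          rw [← ENNReal.ofReal_add (Real.rpow_nonneg (by norm_num) _)
            (mul_nonneg hK0 (by positivity)),
            ← ENNReal.ofReal_mul (by linarith)]
      _ ≤ ENNReal.ofReal (C₁ * (p₀ - p) ^ (-(1 + Δ))) := by
          apply ENNReal.ofReal_le_ofReal
          have e1 : K * (2 / (p₀ - p)) = 2 * (2 * Δ / Real.exp 1) ^ Δ * (p₀ - p) ^ (-(1 + Δ)) := by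
            rw [hKdef]
            rw [show (p₀ - p) ^ (-(1 + Δ)) = (p₀ - p) ^ (-Δ) * (p₀ - p) ^ (-(1:ℝ)) by
              rw [← Real.rpow_add hx0]; ring_nf]
            rw [Real.rpow_neg_one]
            field_simp
          have hxle : p₀ - p ≤ p₀ - 1 := by linarith
          have hmono : (p₀ - 1) ^ (-(1 + Δ)) ≤ (p₀ - p) ^ (-(1 + Δ)) :=
            Real.rpow_le_rpow_of_nonpos hx0 hxle (by linarith)
          have e2 : (2:ℝ) ^ p₀ ≤ 2 ^ p₀ * (p₀ - 1) ^ (1 + Δ) * (p₀ - p) ^ (-(1 + Δ)) := by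
            have h3 : (1:ℝ) ≤ (p₀ - 1) ^ (1 + Δ) * (p₀ - p) ^ (-(1 + Δ)) := by
              have hzero : (1 + Δ) + (-(1 + Δ)) = 0 := by ring
              calc (1:ℝ) = (p₀ - 1) ^ (1 + Δ) * (p₀ - 1) ^ (-(1 + Δ)) := by
                    rw [← Real.rpow_add (by linarith), hzero, Real.rpow_zero]
                _ ≤ (p₀ - 1) ^ (1 + Δ) * (p₀ - p) ^ (-(1 + Δ)) :=
                    mul_le_mul_of_nonneg_left hmono (Real.rpow_nonneg (by linarith) _)
            calc (2:ℝ) ^ p₀ = 2 ^ p₀ * 1 := (mul_one _).symm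
              _ ≤ 2 ^ p₀ * ((p₀ - 1) ^ (1 + Δ) * (p₀ - p) ^ (-(1 + Δ))) :=
                  mul_le_mul_of_nonneg_left h3 (Real.rpow_nonneg (by norm_num) _)
              _ = _ := by ring
          rw [hC₁def, e1]
          have hxp : (0:ℝ) ≤ (p₀ - p) ^ (-(1 + Δ)) := Real.rpow_nonneg hx0.le _
          nlinarith [mul_le_mul_of_nonneg_left e2 (show (0:ℝ) ≤ p₀ by linarith),
            Real.rpow_nonneg (show (0:ℝ) ≤ 2 * Δ / Real.exp 1 by positivity) Δ]
  constructor
  · exact fun p hp => lt_of_le_of_lt (key p hp) ENNReal.ofReal_lt_top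
  refine ⟨C₁ * Real.exp (1 + Δ), by positivity, ?_⟩
  rintro p ⟨hp1, hpp⟩
  have hx0 : 0 < p₀ - p := by linarith
  have hp0 : (0:ℝ) < p := by linarith
  have h := ENNReal.rpow_le_rpow (key p ⟨hp1, hpp⟩) (by positivity : (0:ℝ) ≤ 1 / p)
  rw [ENNReal.ofReal_rpow_of_nonneg
    (mul_nonneg (by linarith) (Real.rpow_nonneg hx0.le _)) (by positivity)] at h
  refine h.trans (ENNReal.ofReal_le_ofReal ?_)
  have hpp₀ : (1:ℝ) ≤ p * p₀ := by nlinarith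
  have step1 : (C₁ * (p₀ - p) ^ (-(1 + Δ))) ^ ((1:ℝ) / p)
      = C₁ ^ ((1:ℝ) / p) * (p₀ - p) ^ (-(1 + Δ) / p) := by
    rw [Real.mul_rpow (by linarith) (Real.rpow_nonneg hx0.le _),
      ← Real.rpow_mul hx0.le]
    congr 2
    ring
  have step2 : C₁ ^ ((1:ℝ) / p) ≤ C₁ := by
    calc C₁ ^ ((1:ℝ) / p) ≤ C₁ ^ (1:ℝ) :=
          Real.rpow_le_rpow_of_exponent_le hC₁1 (by
            rw [div_le_one hp0]; linarith)
      _ = C₁ := Real.rpow_one _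
  have step3 : (p₀ - p) ^ (-(1 + Δ) / p)
      ≤ Real.exp (1 + Δ) * (p₀ - p) ^ (-(1 + Δ) / p₀) := by
    have key3 : (p₀ - p) ^ (-(1 + Δ) / p + (1 + Δ) / p₀) ≤ Real.exp (1 + Δ) := by
      rw [Real.rpow_def_of_pos hx0]
      apply Real.exp_le_exp.mpr
      have hd : Real.log (p₀ - p) * (-(1 + Δ) / p + (1 + Δ) / p₀)
          = ((1 + Δ) / (p * p₀)) * (-(p₀ - p) * Real.log (p₀ - p)) := by
        field_simp
        ring
      rw [hd]
      calc ((1 + Δ) / (p * p₀)) * (-(p₀ - p) * Real.log (p₀ - p))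
          ≤ ((1 + Δ) / (p * p₀)) * 1 :=
            mul_le_mul_of_nonneg_left (neg_mul_log_le hx0) (by positivity)
        _ = (1 + Δ) / (p * p₀) := mul_one _
        _ ≤ 1 + Δ := by
            rw [div_le_iff₀ (by nlinarith : (0:ℝ) < p * p₀)]
            nlinarith
    calc (p₀ - p) ^ (-(1 + Δ) / p)
        = (p₀ - p) ^ (-(1 + Δ) / p + (1 + Δ) / p₀) * (p₀ - p) ^ (-(1 + Δ) / p₀) := by
          rw [← Real.rpow_add hx0]; congr 1; ring
      _ ≤ Real.exp (1 + Δ) * (p₀ - p) ^ (-(1 + Δ) / p₀) :=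
          mul_le_mul_of_nonneg_right key3 (Real.rpow_nonneg hx0.le _)
  calc (C₁ * (p₀ - p) ^ (-(1 + Δ))) ^ ((1:ℝ) / p)
      = C₁ ^ ((1:ℝ) / p) * (p₀ - p) ^ (-(1 + Δ) / p) := step1
    _ ≤ C₁ * (Real.exp (1 + Δ) * (p₀ - p) ^ (-(1 + Δ) / p₀)) := by
        apply mul_le_mul step2 step3 (Real.rpow_nonneg hx0.le _) (by linarith)
    _ = C₁ * Real.exp (1 + Δ) * (p₀ - p) ^ (-(1 + Δ) / p₀) := by ring
end

section
/- Suppose a measurable function f on a probability space satisfies ||f||_p ≤ (p₀ - p)^{-(1+Δ)/p₀} for all p ∈ [1, p₀), where p₀ > 1 and Δ ≥ 0. Then there exists a constant C₂ such that T_f(t) ≤ C₂ · t^{-p₀} (log t)^{Δ+1} for all t > 2, obtained by optimizing the Chebyshev bound T_f(t) ≤ ||f||_p^p / t^p over p ∈ [1, p₀). -/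
open MeasureTheory ENNReal Set Filter

/-!
Chebyshev's inequality with exponent `p` gives
`T_f(t) ≤ t^{-p} ‖f‖_p^p ≤ t^{-p} (p₀ - p)^{-(1+Δ)p/p₀}`. Take `p = p₀ - c / log t` with
`c = min (p₀ - 1) 1 · log 2`, which keeps `p ≥ 1` and `log t / c ≥ 1` for `t > 2`.
Then `t^{-p} = e^c t^{-p₀}`, and since `(1+Δ)p/p₀ ≤ 1+Δ` the moment factor
`(log t / c)^{(1+Δ)p/p₀}` is at most `(log t / c)^{1+Δ}`.
-/

theorem tailFn_le_of_rpow_lintegral_le {X : Type*} [MeasurableSpace X] {μ : Measure X}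
    {f : X → ℝ} (hf : AEMeasurable f μ) {p t M : ℝ} (hp : 0 < p) (ht : 0 < t) (hM : 0 ≤ M)
    (hnorm : (∫⁻ x, ENNReal.ofReal (|f x| ^ p) ∂μ) ^ ((1:ℝ)/p) ≤ ENNReal.ofReal M) :
    tailFn μ f t ≤ ENNReal.ofReal (t ^ (-p) * M ^ p) := by
  have hmeas : AEMeasurable (fun x ↦ ENNReal.ofReal (|f x| ^ p)) μ :=
    ((Real.continuous_rpow_const hp.le).measurable.comp_aemeasurable hf.abs).ennreal_ofReal
  have htp : 0 < t ^ p := Real.rpow_pos_of_pos ht p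
  have hsub : {x | t ≤ |f x|} ⊆ {x | ENNReal.ofReal (t ^ p) ≤ ENNReal.ofReal (|f x| ^ p)} :=
    fun x hx ↦ ENNReal.ofReal_le_ofReal (Real.rpow_le_rpow ht.le hx hp.le)
  have hmoment : ∫⁻ x, ENNReal.ofReal (|f x| ^ p) ∂μ ≤ ENNReal.ofReal (M ^ p) := by
    rwa [one_div, ENNReal.rpow_inv_le_iff hp, ENNReal.ofReal_rpow_of_nonneg hM hp.le] at hnorm
  calc tailFn μ f t
      ≤ (∫⁻ x, ENNReal.ofReal (|f x| ^ p) ∂μ) / ENNReal.ofReal (t ^ p) :=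
        (measure_mono hsub).trans <|
          meas_ge_le_lintegral_div hmeas (by simpa using htp) ENNReal.ofReal_ne_top
    _ ≤ ENNReal.ofReal (M ^ p) / ENNReal.ofReal (t ^ p) := by gcongr
    _ = ENNReal.ofReal (t ^ (-p) * M ^ p) := by
        rw [← ENNReal.ofReal_div_of_pos htp, div_eq_inv_mul, Real.rpow_neg ht.le]

theorem Real.rpow_neg_sub_div_log {t : ℝ} (ht : 0 < t) (hlog : Real.log t ≠ 0) (p₀ c : ℝ) :
    t ^ (-(p₀ - c / Real.log t)) = Real.exp c * t ^ (-p₀) := by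
  rw [neg_sub, sub_eq_add_neg, Real.rpow_add ht, Real.rpow_def_of_pos ht,
    mul_div_cancel₀ c hlog]

theorem Real.rpow_rpow_neg_div_le_inv_rpow {ε p p₀ a : ℝ} (hε : 0 < ε) (hε₁ : ε ≤ 1)
    (hp₀ : 0 < p₀) (hpp₀ : p ≤ p₀) (ha : 0 ≤ a) :
    (ε ^ (-a / p₀)) ^ p ≤ ε⁻¹ ^ a := by
  rw [← Real.rpow_mul hε.le, Real.inv_rpow hε.le, ← Real.rpow_neg hε.le]
  refine Real.rpow_le_rpow_of_exponent_ge hε hε₁ ?_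
  rw [neg_div, neg_mul, neg_le_neg_iff, div_mul_eq_mul_div, div_le_iff₀ hp₀]
  exact mul_le_mul_of_nonneg_left hpp₀ ha

theorem stmt16_general {X : Type*} [MeasurableSpace X] (P : Measure X)
    (f : X → ℝ) (hf : Measurable f) (p₀ Δ : ℝ) (hp₀ : 1 < p₀) (hΔ : 0 ≤ Δ)
    (hnorm : ∀ p ∈ Set.Ico (1:ℝ) p₀,
      (∫⁻ x, ENNReal.ofReal (|f x| ^ p) ∂P) ^ ((1:ℝ)/p)
        ≤ ENNReal.ofReal ((p₀ - p) ^ (-(1 + Δ) / p₀))) :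
    ∃ C₂ : ℝ, 0 < C₂ ∧ ∀ t : ℝ, 2 < t →
      tailFn P f t ≤ ENNReal.ofReal (C₂ * t ^ (-p₀) * (Real.log t) ^ (Δ + 1)) := by
  have hlog2 : 0 < Real.log 2 := Real.log_pos one_lt_two
  set c := min (p₀ - 1) 1 * Real.log 2
  have hc : 0 < c := mul_pos (lt_min (by linarith) one_pos) hlog2
  refine ⟨Real.exp c / c ^ (Δ + 1), by positivity, fun t ht ↦ ?_⟩
  set L := Real.log t
  have hL : Real.log 2 < L := Real.log_lt_log two_pos ht
  have hcL : c ≤ L := (mul_le_of_le_one_left hlog2.le (min_le_right _ _)).trans hL.le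
  have hL0 : 0 < L := hlog2.trans hL
  have hε : 0 < c / L := div_pos hc hL0
  have hε₁ : c / L ≤ 1 := (div_le_one hL0).mpr hcL
  have hεp₀ : c / L ≤ p₀ - 1 := calc
    c / L ≤ c / Real.log 2 := div_le_div_of_nonneg_left hc.le hlog2 hL.le
    _ = min (p₀ - 1) 1 := mul_div_cancel_right₀ _ hlog2.ne'
    _ ≤ p₀ - 1 := min_le_left _ _
  have hp : p₀ - c / L ∈ Set.Ico (1:ℝ) p₀ := ⟨by linarith, by linarith⟩
  have htail := tailFn_le_of_rpow_lintegral_le hf.aemeasurable (t := t) (by linarith [hp.1])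
    (by linarith) (Real.rpow_nonneg (by linarith [hp.2]) _) (hnorm _ hp)
  refine htail.trans (ENNReal.ofReal_le_ofReal ?_)
  rw [show p₀ - (p₀ - c / L) = c / L by ring, Real.rpow_neg_sub_div_log (by linarith) hL0.ne']
  calc Real.exp c * t ^ (-p₀) * ((c / L) ^ (-(1 + Δ) / p₀)) ^ (p₀ - c / L)
      ≤ Real.exp c * t ^ (-p₀) * (c / L)⁻¹ ^ (1 + Δ) := by
        gcongr
        exact Real.rpow_rpow_neg_div_le_inv_rpow hε hε₁ (by linarith) (by linarith)
          (by linarith)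
    _ = Real.exp c / c ^ (Δ + 1) * t ^ (-p₀) * L ^ (Δ + 1) := by
        rw [inv_div, Real.div_rpow hL0.le hc.le, add_comm 1 Δ]
        ring

theorem stmt16 {X : Type*} [MeasurableSpace X] (P : Measure X) [IsProbabilityMeasure P]
    (f : X → ℝ) (hf : Measurable f) (p₀ Δ : ℝ) (hp₀ : 1 < p₀) (hΔ : 0 ≤ Δ)
    (hnorm : ∀ p ∈ Set.Ico (1:ℝ) p₀,
      (∫⁻ x, ENNReal.ofReal (|f x| ^ p) ∂P) ^ ((1:ℝ)/p)
        ≤ ENNReal.ofReal ((p₀ - p) ^ (-(1 + Δ) / p₀))) :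
    ∃ C₂ : ℝ, 0 < C₂ ∧ ∀ t : ℝ, 2 < t →
      tailFn P f t ≤ ENNReal.ofReal (C₂ * t ^ (-p₀) * (Real.log t) ^ (Δ + 1)) :=
  stmt16_general P f hf p₀ Δ hp₀ hΔ hnorm
end
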